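/- arXiv:2109.03867 — 2 statements merged into one kernel-verified Lean document; each statement's English description precedes it below -/
import Mathlib

section
/- Under the setting of a locally balanced proposal (finite state space X, positive unnormalized target p̃, positive balancing function g, symmetric irreflexive neighborhoods N with nonempty N(x)), the Metropolis–Hastings acceptance probability A(x',x) = min{1, p̃(x')Q(x|x')/(p̃(x)Q(x'|x))} simplifies to A(x',x) = min{1, Z(x)/Z(x')} for all x' ∈ N(x). -/
/-!
The balancing identity `g t = t * g (1 / t)` makes the unnormalized flux
`p̃ x * g (p̃ x' / p̃ x)` symmetric in `x` and `x'`. In the Metropolis–Hastings ratio the two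
fluxes cancel, leaving only the normalizers `Z x / Z x'`.
-/

theorem mul_apply_div_comm_of_balancing {g : ℝ → ℝ}
    (hbal : ∀ t : ℝ, 0 < t → g t = t * g (1 / t)) {a b : ℝ} (ha : 0 < a) (hb : 0 < b) :
    a * g (b / a) = b * g (a / b) := by
  rw [hbal (b / a) (div_pos hb ha), one_div_div, ← mul_assoc, mul_div_cancel₀ b ha.ne']

theorem locally_balanced_acceptance_simplifies_general
    {X : Type*} [DecidableEq X]
    (ptil : X → ℝ) (hp : ∀ x, 0 < ptil x)
    (g : ℝ → ℝ)
    (hbal : ∀ t : ℝ, 0 < t → g t = t * g (1 / t))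
    (hgpos : ∀ t : ℝ, 0 < t → 0 < g t)
    (N : X → Finset X)
    (hsym : ∀ x x', x' ∈ N x ↔ x ∈ N x')
    (Z : X → ℝ)
    (Q : X → X → ℝ)
    (hQ : ∀ x' x, Q x' x = g (ptil x' / ptil x) * (if x' ∈ N x then 1 else 0) / Z x) :
    ∀ x x', x' ∈ N x →
      min 1 (ptil x' * Q x x' / (ptil x * Q x' x)) = min 1 (Z x / Z x') := by
  intro x x' hx'
  have hQ_back : Q x x' = g (ptil x / ptil x') / Z x' := by
    rw [hQ, if_pos ((hsym x x').mp hx'), mul_one]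
  have hQ_forth : Q x' x = g (ptil x' / ptil x) / Z x := by
    rw [hQ, if_pos hx', mul_one]
  have hflux : ptil x' * g (ptil x / ptil x') = ptil x * g (ptil x' / ptil x) :=
    mul_apply_div_comm_of_balancing hbal (hp x') (hp x)
  have hflux_ne : ptil x * g (ptil x' / ptil x) ≠ 0 :=
    (mul_pos (hp x) (hgpos _ (div_pos (hp x') (hp x)))).ne'
  rw [hQ_back, hQ_forth, mul_div_assoc', mul_div_assoc', hflux,
    div_div_div_cancel_left' _ _ hflux_ne]

theorem locally_balanced_acceptance_simplifies
    {X : Type*} [Fintype X] [DecidableEq X]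
    (ptil : X → ℝ) (hp : ∀ x, 0 < ptil x)
    (g : ℝ → ℝ)
    (hbal : ∀ t : ℝ, 0 < t → g t = t * g (1 / t))
    (hgpos : ∀ t : ℝ, 0 < t → 0 < g t)
    (N : X → Finset X)
    (hsym : ∀ x x', x' ∈ N x ↔ x ∈ N x')
    (hirr : ∀ x, x ∉ N x)
    (hne : ∀ x, (N x).Nonempty)
    (Z : X → ℝ) (hZ : ∀ x, Z x = ∑ x'' ∈ N x, g (ptil x'' / ptil x))
    (Q : X → X → ℝ)
    (hQ : ∀ x' x, Q x' x = g (ptil x' / ptil x) * (if x' ∈ N x then 1 else 0) / Z x) :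
    ∀ x x', x' ∈ N x →
      min 1 (ptil x' * Q x x' / (ptil x * Q x' x)) = min 1 (Z x / Z x') :=
  locally_balanced_acceptance_simplifies_general ptil hp g hbal hgpos N hsym Z Q hQ
end

section
/- Let g be a positive balancing function on ℝ>0 (g(t) = t·g(1/t), g > 0). For an unnormalized positive target p̃ on a finite space X with symmetric neighborhood structure, define Z(x) = Σ_{x'∈N(x)} g(p̃(x')/p̃(x)). Then the function A(x',x) = min{1, Z(x)/Z(x')} satisfies the MH-type symmetry: p̃(x)·g(p̃(x')/p̃(x))/Z(x) · A(x',x) = p̃(x')·g(p̃(x)/p̃(x'))/Z(x') · A(x,x') for all x' ∈ N(x). -/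
theorem acceptance_mh_symmetry
    {X : Type*} [Fintype X] [DecidableEq X]
    (ptil : X → ℝ) (hp : ∀ x, 0 < ptil x)
    (g : ℝ → ℝ)
    (hbal : ∀ t : ℝ, 0 < t → g t = t * g (1 / t))
    (hgpos : ∀ t : ℝ, 0 < t → 0 < g t)
    (N : X → Finset X)
    (hsym : ∀ x x', x' ∈ N x ↔ x ∈ N x')
    (hne : ∀ x, (N x).Nonempty)
    (Z : X → ℝ) (hZ : ∀ x, Z x = ∑ x'' ∈ N x, g (ptil x'' / ptil x)) :
    ∀ x x', x' ∈ N x →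
      ptil x * g (ptil x' / ptil x) / Z x * min 1 (Z x / Z x')
        = ptil x' * g (ptil x / ptil x') / Z x' * min 1 (Z x' / Z x) := by
  intro x x' hx'
  have hZpos : ∀ y, 0 < Z y := by
    intro y
    rw [hZ y]
    exact Finset.sum_pos (fun z _ => hgpos _ (div_pos (hp z) (hp y))) (hne y)
  have hnum : ptil x' * g (ptil x / ptil x') = ptil x * g (ptil x' / ptil x) := by
    have ht : (0:ℝ) < ptil x / ptil x' := div_pos (hp x) (hp x')
    rw [hbal _ ht]
    have : (1:ℝ) / (ptil x / ptil x') = ptil x' / ptil x := by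
      field_simp
    rw [this]
    have h1 := (hp x).ne'
    have h2 := (hp x').ne'
    field_simp
  have key : ∀ a b : ℝ, 0 < a → 0 < b → min 1 (a / b) / a = min 1 (b / a) / b := by
    intro a b ha hb
    rcases le_total a b with h | h
    · rw [min_eq_right (by rw [div_le_one hb]; exact h),
        min_eq_left ((one_le_div ha).mpr h)]
      field_simp
    · rw [min_eq_left ((one_le_div hb).mpr h),
        min_eq_right ((div_le_one ha).mpr h)]
      field_simp
  have := key (Z x) (Z x') (hZpos x) (hZpos x')
  rw [hnum]
  rw [div_mul_eq_mul_div, mul_div_assoc, this, ← mul_div_assoc, ← div_mul_eq_mul_div]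
end
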